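/- Let A ∈ ℂ^{n×n} and ε ∈ (0,1). Let B̄ ∈ ℂ^{n×d} have full column rank with σ_min(B̄) ≥ 1/(1+ε) and σ_max(B̄) ≤ 1/(1−ε), and let Q ∈ ℂ^{n×d} have orthonormal columns with the same column span as B̄. Let S ∈ ℂ^{s×n} be a subspace embedding with distortion ε for the column span of [AB̄, B̄], and suppose SB̄ has full column rank. Set M̄⋆ = (B̄*B̄)⁻¹B̄*(A·B̄) and M̄ = ((SB̄)*(SB̄))⁻¹(SB̄)*(S·A·B̄). Then ‖M̄ − M̄⋆‖_F ≤ (2(1+ε)/(1−ε)²)·‖(I − QQ*)AQ‖_F. -/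

import Mathlib

/-!
Since `(S B̄)† S B̄ = 1`, the difference `M̄ - M̄⋆` equals `(S B̄)† S R` with `R = A B̄ - B̄ M̄⋆`
the Rayleigh–Ritz residual. The columns of `R` lie in `span [A B̄, B̄]`, so `S` stretches them by
at most `1 + ε`; and `S B̄` is bounded below by `(1 - ε) σ_min(B̄)`, so `(S B̄)†` has norm at most
`(1 + ε) / (1 - ε)`. Finally `B̄ = Q G` with `G = Qᴴ B̄` invertible, so `B̄ B̄† = Q Qᴴ` and
`R = (1 - Q Qᴴ) A Q G` with `‖G‖ ≤ σ_max(B̄) ≤ 1 / (1 - ε)`. This gives the constant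
`(1 + ε)² / (1 - ε)² ≤ 2 (1 + ε) / (1 - ε)²`.
-/

open Matrix

noncomputable def nrm2 {n : ℕ} (v : Fin n → ℂ) : ℝ :=
  ‖(WithLp.equiv 2 (Fin n → ℂ)).symm v‖


noncomputable def fnorm {m n : ℕ} (M : Matrix (Fin m) (Fin n) ℂ) : ℝ :=
  Real.sqrt (∑ i, ∑ j, ‖M i j‖ ^ 2)


noncomputable def sigmaMax {n d : ℕ} (M : Matrix (Fin n) (Fin d) ℂ) : ℝ :=
  sSup {r : ℝ | ∃ y : Fin d → ℂ, nrm2 y = 1 ∧ r = nrm2 (M.mulVec y)}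

noncomputable def sigmaMin {n d : ℕ} (M : Matrix (Fin n) (Fin d) ℂ) : ℝ :=
  sInf {r : ℝ | ∃ y : Fin d → ℂ, nrm2 y = 1 ∧ r = nrm2 (M.mulVec y)}

section Nrm2

variable {n : ℕ}

lemma nrm2_nonneg (v : Fin n → ℂ) : 0 ≤ nrm2 v := norm_nonneg _

lemma nrm2_eq_zero {v : Fin n → ℂ} : nrm2 v = 0 ↔ v = 0 := by
  rw [nrm2, norm_eq_zero]
  simp

lemma nrm2_smul (c : ℂ) (v : Fin n → ℂ) : nrm2 (c • v) = ‖c‖ * nrm2 v :=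
  norm_smul c (WithLp.toLp 2 v)

lemma nrm2_sq_eq_sum (v : Fin n → ℂ) : nrm2 v ^ 2 = ∑ i, ‖v i‖ ^ 2 := by
  rw [nrm2, EuclideanSpace.norm_sq_eq]
  rfl

lemma nrm2_sq_eq_re_dotProduct (v : Fin n → ℂ) : nrm2 v ^ 2 = (star v ⬝ᵥ v).re := by
  rw [nrm2, dotProduct_comm]
  exact norm_sq_eq_re_inner (𝕜 := ℂ) (WithLp.toLp 2 v)

lemma norm_star_dotProduct_le (x y : Fin n → ℂ) : ‖star x ⬝ᵥ y‖ ≤ nrm2 x * nrm2 y := by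
  rw [dotProduct_comm]
  exact norm_inner_le_norm (𝕜 := ℂ) (WithLp.toLp 2 x) (WithLp.toLp 2 y)

lemma nrm2_le_of_sq_le_mul {v : Fin n → ℂ} {c : ℝ} (hc : 0 ≤ c) (h : nrm2 v ^ 2 ≤ c * nrm2 v) :
    nrm2 v ≤ c := by
  nlinarith [nrm2_nonneg v]

end Nrm2

section MulVec

variable {m n : ℕ}

lemma star_mulVec_dotProduct (C : Matrix (Fin m) (Fin n) ℂ) (x : Fin n → ℂ) (y : Fin m → ℂ) :
    star (C *ᵥ x) ⬝ᵥ y = star x ⬝ᵥ (Cᴴ *ᵥ y) := by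
  rw [dotProduct_mulVec, star_mulVec]

lemma mulVec_mem_span_range_transpose (M : Matrix (Fin m) (Fin n) ℂ) (y : Fin n → ℂ) :
    M *ᵥ y ∈ Submodule.span ℂ (Set.range Mᵀ) :=
  M.range_mulVecLin ▸ LinearMap.mem_range_self M.mulVecLin y

lemma exists_nrm2_eq_one_mulVec (M : Matrix (Fin m) (Fin n) ℂ) {y : Fin n → ℂ} (hy : y ≠ 0) :
    ∃ u, nrm2 u = 1 ∧ nrm2 (M *ᵥ y) = nrm2 y * nrm2 (M *ᵥ u) := by
  have hy' : nrm2 y ≠ 0 := nrm2_eq_zero.not.2 hy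
  have hnorm : ‖((nrm2 y : ℂ))⁻¹‖ = (nrm2 y)⁻¹ := by
    rw [norm_inv, Complex.norm_real, Real.norm_of_nonneg (nrm2_nonneg y)]
  refine ⟨((nrm2 y : ℂ))⁻¹ • y, ?_, ?_⟩
  · rw [nrm2_smul, hnorm, inv_mul_cancel₀ hy']
  · rw [mulVec_smul, nrm2_smul, hnorm, mul_inv_cancel_left₀ hy']

lemma le_nrm2_mulVec_of_le_sigmaMin {M : Matrix (Fin m) (Fin n) ℂ} {σ : ℝ} (h : σ ≤ sigmaMin M)
    (y : Fin n → ℂ) : σ * nrm2 y ≤ nrm2 (M *ᵥ y) := by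
  rcases eq_or_ne y 0 with rfl | hy
  · simp [nrm2_eq_zero.2]
  obtain ⟨u, hu, hMy⟩ := exists_nrm2_eq_one_mulVec M hy
  have hbdd : BddBelow {r | ∃ y, nrm2 y = 1 ∧ r = nrm2 (M *ᵥ y)} :=
    ⟨0, by rintro r ⟨z, -, rfl⟩; exact nrm2_nonneg _⟩
  rw [hMy, mul_comm σ]
  gcongr
  · exact nrm2_nonneg y
  · exact h.trans (csInf_le hbdd ⟨u, hu, rfl⟩)

open scoped Matrix.Norms.L2Operator in
lemma nrm2_mulVec_le_of_sigmaMax_le {M : Matrix (Fin m) (Fin n) ℂ} {σ : ℝ} (h : sigmaMax M ≤ σ)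
    (y : Fin n → ℂ) : nrm2 (M *ᵥ y) ≤ σ * nrm2 y := by
  rcases eq_or_ne y 0 with rfl | hy
  · simp [nrm2_eq_zero.2]
  obtain ⟨u, hu, hMy⟩ := exists_nrm2_eq_one_mulVec M hy
  have hbdd : BddAbove {r | ∃ y, nrm2 y = 1 ∧ r = nrm2 (M *ᵥ y)} := by
    refine ⟨‖M‖, ?_⟩
    rintro r ⟨z, hz, rfl⟩
    have hMz : nrm2 (M *ᵥ z) ≤ ‖M‖ * nrm2 z := M.l2_opNorm_mulVec (WithLp.toLp 2 z)
    rwa [hz, mul_one] at hMz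
  rw [hMy, mul_comm σ]
  gcongr
  · exact nrm2_nonneg y
  · exact (le_csSup hbdd ⟨u, hu, rfl⟩).trans h

lemma nrm2_conjTranspose_mulVec_le {C : Matrix (Fin m) (Fin n) ℂ} {κ : ℝ} (hκ : 0 ≤ κ)
    (hC : ∀ y, nrm2 (C *ᵥ y) ≤ κ * nrm2 y) (x : Fin m → ℂ) : nrm2 (Cᴴ *ᵥ x) ≤ κ * nrm2 x := by
  refine nrm2_le_of_sq_le_mul (by positivity [nrm2_nonneg x]) ?_
  calc nrm2 (Cᴴ *ᵥ x) ^ 2 = (star x ⬝ᵥ (C *ᵥ (Cᴴ *ᵥ x))).re := by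
        rw [nrm2_sq_eq_re_dotProduct, star_mulVec_dotProduct, conjTranspose_conjTranspose]
    _ ≤ nrm2 x * nrm2 (C *ᵥ (Cᴴ *ᵥ x)) :=
        (Complex.re_le_norm _).trans (norm_star_dotProduct_le _ _)
    _ ≤ nrm2 x * (κ * nrm2 (Cᴴ *ᵥ x)) := by gcongr; exacts [nrm2_nonneg x, hC _]
    _ = κ * nrm2 x * nrm2 (Cᴴ *ᵥ x) := by ring

lemma nrm2_mulVec_of_conjTranspose_mul_self_eq_one {Q : Matrix (Fin m) (Fin n) ℂ}
    (hQ : Qᴴ * Q = 1) (x : Fin n → ℂ) : nrm2 (Q *ᵥ x) = nrm2 x := by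
  refine (pow_left_inj₀ (nrm2_nonneg _) (nrm2_nonneg _) two_ne_zero).1 ?_
  rw [nrm2_sq_eq_re_dotProduct, star_mulVec_dotProduct, mulVec_mulVec, hQ, one_mulVec,
    nrm2_sq_eq_re_dotProduct]

lemma mulVec_injective_of_le_nrm2_mulVec {C : Matrix (Fin m) (Fin n) ℂ} {σ : ℝ} (hσ : 0 < σ)
    (hC : ∀ y, σ * nrm2 y ≤ nrm2 (C *ᵥ y)) : Function.Injective C.mulVec := by
  intro y y' h
  have hle := hC (y - y')
  rw [mulVec_sub, h, sub_self, nrm2_eq_zero.2 rfl] at hle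
  have hzero : nrm2 (y - y') = 0 := le_antisymm (nonpos_of_mul_nonpos_right hle hσ) (nrm2_nonneg _)
  exact sub_eq_zero.1 (nrm2_eq_zero.1 hzero)

open scoped ComplexOrder in
lemma isUnit_det_conjTranspose_mul_self {C : Matrix (Fin m) (Fin n) ℂ}
    (hC : Function.Injective C.mulVec) : IsUnit (Cᴴ * C).det := by
  rw [← isUnit_iff_isUnit_det, ← mulVec_injective_iff_isUnit]
  intro y y' h
  apply hC
  rw [← sub_eq_zero, ← mulVec_sub, ← conjTranspose_mul_self_mulVec_eq_zero, mulVec_sub, h,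
    sub_self]

end MulVec

/-- `(Cᴴ C)⁻¹ Cᴴ`: the Moore–Penrose pseudoinverse when `C` has full column rank (and junk
otherwise, since `⁻¹` is then `0`). -/
noncomputable def pinv {m n : Type*} [Fintype m] [Fintype n] [DecidableEq n]
    (C : Matrix m n ℂ) : Matrix n m ℂ :=
  (Cᴴ * C)⁻¹ * Cᴴ

section Pinv

variable {m n : ℕ}

lemma pinv_mul_self {C : Matrix (Fin m) (Fin n) ℂ} (hC : IsUnit (Cᴴ * C).det) : pinv C * C = 1 := by
  rw [pinv, Matrix.mul_assoc, nonsing_inv_mul _ hC]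

/-- `C (pinv C) w` is the orthogonal projection of `w` onto the range of `C`, hence no longer
than `w`. -/
lemma nrm2_pinv_mulVec_le {C : Matrix (Fin m) (Fin n) ℂ} {σ : ℝ} (hσ : 0 < σ)
    (hC : ∀ y, σ * nrm2 y ≤ nrm2 (C *ᵥ y)) (w : Fin m → ℂ) :
    nrm2 (pinv C *ᵥ w) ≤ σ⁻¹ * nrm2 w := by
  set z := pinv C *ᵥ w
  have hnormal : (Cᴴ * C) *ᵥ z = Cᴴ *ᵥ w := by
    rw [mulVec_mulVec, pinv, ← Matrix.mul_assoc, mul_nonsing_inv _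
      (isUnit_det_conjTranspose_mul_self (mulVec_injective_of_le_nrm2_mulVec hσ hC)),
      Matrix.one_mul]
  have hCz : nrm2 (C *ᵥ z) ≤ nrm2 w := by
    refine nrm2_le_of_sq_le_mul (nrm2_nonneg w) ?_
    calc nrm2 (C *ᵥ z) ^ 2 = (star (C *ᵥ z) ⬝ᵥ w).re := by
          rw [nrm2_sq_eq_re_dotProduct, star_mulVec_dotProduct, mulVec_mulVec, hnormal,
            ← star_mulVec_dotProduct]
      _ ≤ nrm2 (C *ᵥ z) * nrm2 w := (Complex.re_le_norm _).trans (norm_star_dotProduct_le _ _)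
      _ = nrm2 w * nrm2 (C *ᵥ z) := mul_comm _ _
  rw [le_inv_mul_iff₀ hσ]
  exact (hC z).trans hCz

end Pinv

section Fnorm

variable {m n p : ℕ}

lemma fnorm_nonneg (X : Matrix (Fin m) (Fin n) ℂ) : 0 ≤ fnorm X := Real.sqrt_nonneg _

lemma fnorm_sq_eq_sum_nrm2_sq (X : Matrix (Fin m) (Fin n) ℂ) :
    fnorm X ^ 2 = ∑ j, nrm2 (Xᵀ j) ^ 2 := by
  rw [fnorm, Real.sq_sqrt (by positivity), Finset.sum_comm]
  simp_rw [nrm2_sq_eq_sum]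
  rfl

lemma fnorm_conjTranspose (X : Matrix (Fin m) (Fin n) ℂ) : fnorm Xᴴ = fnorm X := by
  rw [fnorm, fnorm, Finset.sum_comm]
  simp [conjTranspose_apply]

lemma fnorm_mul_le_of_col_le {C : Matrix (Fin m) (Fin n) ℂ} {X : Matrix (Fin n) (Fin p) ℂ}
    {κ : ℝ} (hκ : 0 ≤ κ) (h : ∀ j, nrm2 (C *ᵥ Xᵀ j) ≤ κ * nrm2 (Xᵀ j)) :
    fnorm (C * X) ≤ κ * fnorm X := by
  refine le_of_pow_le_pow_left₀ two_ne_zero (by positivity [fnorm_nonneg X]) ?_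
  rw [mul_pow, fnorm_sq_eq_sum_nrm2_sq, fnorm_sq_eq_sum_nrm2_sq, Finset.mul_sum]
  gcongr with j
  rw [← mul_pow]
  exact pow_le_pow_left₀ (nrm2_nonneg _) (h j) 2

lemma fnorm_mul_le_of_conjTranspose_mulVec_le {X : Matrix (Fin m) (Fin n) ℂ}
    {C : Matrix (Fin n) (Fin p) ℂ} {κ : ℝ} (hκ : 0 ≤ κ) (hC : ∀ y, nrm2 (Cᴴ *ᵥ y) ≤ κ * nrm2 y) :
    fnorm (X * C) ≤ κ * fnorm X := by
  rw [← fnorm_conjTranspose, conjTranspose_mul, ← fnorm_conjTranspose X]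
  exact fnorm_mul_le_of_col_le hκ fun j => hC _

end Fnorm

section Projector

variable {n d : ℕ}

lemma mul_conjTranspose_mul_eq_of_span_le {Q B : Matrix (Fin n) (Fin d) ℂ} (hQ : Qᴴ * Q = 1)
    (hspan : Submodule.span ℂ (Set.range Bᵀ) ≤ Submodule.span ℂ (Set.range Qᵀ)) :
    Q * (Qᴴ * B) = B := by
  refine ext_iff_mulVec.2 fun y => ?_
  obtain ⟨z, hz⟩ : B *ᵥ y ∈ LinearMap.range Q.mulVecLin :=
    Q.range_mulVecLin ▸ hspan (mulVec_mem_span_range_transpose B y)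
  rw [mulVecLin_apply] at hz
  rw [← mulVec_mulVec, ← mulVec_mulVec, ← hz, mulVec_mulVec z, hQ, one_mulVec]

lemma mul_pinv_eq_mul_conjTranspose {Q : Matrix (Fin n) (Fin d) ℂ} {G : Matrix (Fin d) (Fin d) ℂ}
    (hQ : Qᴴ * Q = 1) (hG : IsUnit G.det) : Q * G * pinv (Q * G) = Q * Qᴴ := by
  have hGH : IsUnit Gᴴ.det := by rw [det_conjTranspose]; exact hG.star
  have hgram : (Q * G)ᴴ * (Q * G) = Gᴴ * G := by
    rw [conjTranspose_mul, Matrix.mul_assoc, ← Matrix.mul_assoc Qᴴ, hQ, Matrix.one_mul]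
  calc Q * G * pinv (Q * G) = Q * (G * G⁻¹) * (Gᴴ⁻¹ * Gᴴ) * Qᴴ := by
        rw [pinv, hgram, Matrix.mul_inv_rev, conjTranspose_mul]
        simp only [Matrix.mul_assoc]
    _ = Q * Qᴴ := by
        rw [mul_nonsing_inv _ hG, nonsing_inv_mul _ hGH, Matrix.mul_one, Matrix.mul_one]

end Projector

lemma le_nrm2_mul_mulVec {m n d : ℕ} {S : Matrix (Fin m) (Fin n) ℂ} {B : Matrix (Fin n) (Fin d) ℂ}
    {a b : ℝ} (ha : 0 ≤ a) (hS : ∀ v ∈ Submodule.span ℂ (Set.range Bᵀ), a * nrm2 v ≤ nrm2 (S *ᵥ v))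
    (hB : ∀ y, b * nrm2 y ≤ nrm2 (B *ᵥ y)) (y : Fin d → ℂ) :
    a * b * nrm2 y ≤ nrm2 ((S * B) *ᵥ y) := by
  rw [← mulVec_mulVec, mul_assoc]
  exact (mul_le_mul_of_nonneg_left (hB y) ha).trans
    (hS _ (mulVec_mem_span_range_transpose B y))

lemma pinv_mul_mul_sub_eq {m n d : ℕ} {S : Matrix (Fin m) (Fin n) ℂ} {B : Matrix (Fin n) (Fin d) ℂ}
    (hSB : IsUnit ((S * B)ᴴ * (S * B)).det) (Y : Matrix (Fin n) (Fin d) ℂ)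
    (M : Matrix (Fin d) (Fin d) ℂ) :
    pinv (S * B) * (S * Y) - M = pinv (S * B) * (S * (Y - B * M)) := by
  rw [Matrix.mul_sub S, ← Matrix.mul_assoc S B M, Matrix.mul_sub, ← Matrix.mul_assoc _ (S * B),
    pinv_mul_self hSB, Matrix.one_mul]

/-- Writing `B = Q G` with `G` invertible, the Rayleigh–Ritz residual is `(1 - Q Qᴴ) A Q G`. -/
lemma fnorm_rayleighRitz_residual_le {n d : ℕ} (A : Matrix (Fin n) (Fin n) ℂ)
    {Q B : Matrix (Fin n) (Fin d) ℂ} (hQ : Qᴴ * Q = 1)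
    (hspan : Submodule.span ℂ (Set.range Bᵀ) ≤ Submodule.span ℂ (Set.range Qᵀ))
    {σ κ : ℝ} (hσ : 0 < σ) (hκ : 0 ≤ κ) (hlow : ∀ y, σ * nrm2 y ≤ nrm2 (B *ᵥ y))
    (hhigh : ∀ y, nrm2 (B *ᵥ y) ≤ κ * nrm2 y) :
    fnorm (A * B - B * (pinv B * (A * B))) ≤ κ * fnorm ((1 - Q * Qᴴ) * (A * Q)) := by
  obtain ⟨G, rfl⟩ : ∃ G, Q * G = B := ⟨_, mul_conjTranspose_mul_eq_of_span_le hQ hspan⟩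
  have hGy : ∀ y, nrm2 (G *ᵥ y) = nrm2 ((Q * G) *ᵥ y) := fun y => by
    rw [← mulVec_mulVec, nrm2_mulVec_of_conjTranspose_mul_self_eq_one hQ]
  have hG : IsUnit G.det := (isUnit_iff_isUnit_det G).1 <| mulVec_injective_iff_isUnit.1 <|
    mulVec_injective_of_le_nrm2_mulVec hσ fun y => hGy y ▸ hlow y
  have hres : A * (Q * G) - Q * G * (pinv (Q * G) * (A * (Q * G))) =
      (1 - Q * Qᴴ) * (A * Q) * G := by
    rw [← Matrix.mul_assoc (Q * G), mul_pinv_eq_mul_conjTranspose hQ hG]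
    simp only [Matrix.sub_mul, Matrix.one_mul, Matrix.mul_assoc]
  rw [hres]
  exact fnorm_mul_le_of_conjTranspose_mulVec_le hκ
    (nrm2_conjTranspose_mulVec_le hκ fun y => hGy y ▸ hhigh y)

theorem sRR_close_to_RR_whitened_general
    {n d s : ℕ} (A : Matrix (Fin n) (Fin n) ℂ) (ε : ℝ) (hε : ε ∈ Set.Ioo (0 : ℝ) 1)
    (Bbar : Matrix (Fin n) (Fin d) ℂ)
    (hmin : 1 / (1 + ε) ≤ sigmaMin Bbar) (hmax : sigmaMax Bbar ≤ 1 / (1 - ε))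
    (Q : Matrix (Fin n) (Fin d) ℂ) (hQ : Qᴴ * Q = 1)
    (hspan : Submodule.span ℂ (Set.range Qᵀ) = Submodule.span ℂ (Set.range Bbarᵀ))
    (S : Matrix (Fin s) (Fin n) ℂ)
    (hS : ∀ v ∈ Submodule.span ℂ (Set.range (A * Bbar)ᵀ ∪ Set.range Bbarᵀ),
      (1 - ε) * nrm2 v ≤ nrm2 (S.mulVec v) ∧ nrm2 (S.mulVec v) ≤ (1 + ε) * nrm2 v) :
    fnorm (((S * Bbar)ᴴ * (S * Bbar))⁻¹ * (S * Bbar)ᴴ * (S * (A * Bbar)) -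
        (Bbarᴴ * Bbar)⁻¹ * Bbarᴴ * (A * Bbar)) ≤
      2 * (1 + ε) / (1 - ε) ^ 2 * fnorm ((1 - Q * Qᴴ) * (A * Q)) := by
  obtain ⟨hε0, hε1⟩ := hε
  have hBlow := le_nrm2_mulVec_of_le_sigmaMin hmin
  have hSBlow := le_nrm2_mul_mulVec (by linarith)
    (fun v hv => (hS v (Submodule.span_mono Set.subset_union_right hv)).1) hBlow
  have hσ : 0 < (1 - ε) * (1 / (1 + ε)) := mul_pos (by linarith) (by positivity)
  change fnorm (pinv (S * Bbar) * (S * (A * Bbar)) - pinv Bbar * (A * Bbar)) ≤ _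
  rw [pinv_mul_mul_sub_eq (isUnit_det_conjTranspose_mul_self
    (mulVec_injective_of_le_nrm2_mulVec hσ hSBlow))]
  set R := A * Bbar - Bbar * (pinv Bbar * (A * Bbar))
  have hRcol : ∀ j, Rᵀ j ∈ Submodule.span ℂ (Set.range (A * Bbar)ᵀ ∪ Set.range Bbarᵀ) := fun j =>
    Submodule.sub_mem _ (Submodule.subset_span (Or.inl ⟨j, rfl⟩))
      (Submodule.span_mono Set.subset_union_right (mulVec_mem_span_range_transpose Bbar _))
  have hR := fnorm_rayleighRitz_residual_le A hQ hspan.ge (by positivity) (by positivity) hBlow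
    (nrm2_mulVec_le_of_sigmaMax_le hmax)
  calc fnorm (pinv (S * Bbar) * (S * R))
      ≤ ((1 - ε) * (1 / (1 + ε)))⁻¹ * fnorm (S * R) :=
        fnorm_mul_le_of_col_le (by positivity) fun j => nrm2_pinv_mulVec_le hσ hSBlow _
    _ ≤ ((1 - ε) * (1 / (1 + ε)))⁻¹ * ((1 + ε) * fnorm R) := by
        gcongr
        exact fnorm_mul_le_of_col_le (by linarith) fun j => (hS _ (hRcol j)).2
    _ = (1 + ε) ^ 2 / (1 - ε) * fnorm R := by field_simp
    _ ≤ (1 + ε) ^ 2 / (1 - ε) * (1 / (1 - ε) * fnorm ((1 - Q * Qᴴ) * (A * Q))) := by gcongr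
    _ ≤ 2 * (1 + ε) / (1 - ε) ^ 2 * fnorm ((1 - Q * Qᴴ) * (A * Q)) := by
        rw [← mul_assoc, div_mul_div_comm, mul_one, ← sq]
        gcongr
        · exact fnorm_nonneg _
        · nlinarith

/-- Backward-stability bound for sketched Rayleigh–Ritz with a whitened basis:
the sRR matrix is close to the RR matrix when range(B̄) is nearly invariant. -/
theorem sRR_close_to_RR_whitened
    {n d s : ℕ} (A : Matrix (Fin n) (Fin n) ℂ) (ε : ℝ) (hε : ε ∈ Set.Ioo (0 : ℝ) 1)
    (Bbar : Matrix (Fin n) (Fin d) ℂ) (hBbar : Bbar.rank = d)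
    (hmin : 1 / (1 + ε) ≤ sigmaMin Bbar) (hmax : sigmaMax Bbar ≤ 1 / (1 - ε))
    (Q : Matrix (Fin n) (Fin d) ℂ) (hQ : Qᴴ * Q = 1)
    (hspan : Submodule.span ℂ (Set.range Qᵀ) = Submodule.span ℂ (Set.range Bbarᵀ))
    (S : Matrix (Fin s) (Fin n) ℂ)
    (hS : ∀ v ∈ Submodule.span ℂ (Set.range (A * Bbar)ᵀ ∪ Set.range Bbarᵀ),
      (1 - ε) * nrm2 v ≤ nrm2 (S.mulVec v) ∧ nrm2 (S.mulVec v) ≤ (1 + ε) * nrm2 v)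
    (hSB : (S * Bbar).rank = d) :
    fnorm (((S * Bbar)ᴴ * (S * Bbar))⁻¹ * (S * Bbar)ᴴ * (S * (A * Bbar)) -
        (Bbarᴴ * Bbar)⁻¹ * Bbarᴴ * (A * Bbar)) ≤
      2 * (1 + ε) / (1 - ε) ^ 2 * fnorm ((1 - Q * Qᴴ) * (A * Q)) :=
  sRR_close_to_RR_whitened_general A ε hε Bbar hmin hmax Q hQ hspan S hS
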